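/- Let d ≥ 2 and ℓ ≥ 2 be integers, 𝒜_(d) = {a_1, …, a_d}, and let σ: 𝒜_(d)* → 𝒜_(d)* be any morphism whose incidence matrix is M(σ) = ℓ·I_d + 1_{d×d} (I_d the d×d identity matrix, 1_{d×d} the all-ones d×d matrix). Then σ is recognizable in the full shift 𝒜_(d)^ℤ. -/

import Mathlib

open MeasureTheory Filter
open scoped ENNReal

namespace SAdicPaper

universe u v

/-- Biinfinite words over the alphabet `A`. -/
def ZWord (A : Type u) : Type u := ℤ → A

noncomputable instance {A : Type u} : TopologicalSpace (ZWord A) :=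
  @Pi.topologicalSpace ℤ (fun _ => A) (fun _ => ⊥)

instance {A : Type u} : MeasurableSpace (ZWord A) :=
  @MeasurableSpace.pi ℤ (fun _ => A) (fun _ => ⊤)

instance finAddTwoNonempty (n : ℕ) : Nonempty (Fin (n + 2)) := ⟨⟨0, by omega⟩⟩

variable {A : Type u} {B : Type v}

/-- The shift map `T`. -/
def shift (x : ZWord A) : ZWord A := fun i => x (i + 1)

/-- Shift by an arbitrary integer amount. -/
def shiftBy (m : ℤ) (x : ZWord A) : ZWord A := fun i => x (i + m)

/-- A subshift: a non-empty, closed, shift-invariant set of biinfinite words. -/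
def IsSubshift (X : Set (ZWord A)) : Prop :=
  X.Nonempty ∧ IsClosed X ∧ shift '' X = X

/-- The finite subword of `x` of length `n` starting at position `k`. -/
def subword (x : ZWord A) (k : ℤ) (n : ℕ) : List A :=
  (List.range n).map fun i => x (k + i)

/-- The language of finite factors of elements of `X`. -/
def lang (X : Set (ZWord A)) : Set (List A) :=
  { w | ∃ x ∈ X, ∃ k : ℤ, w = subword x k w.length }

/-- The subshift generated by a language. -/
def subshiftGen (L : Set (List A)) : Set (ZWord A) :=
  { x | ∀ (k : ℤ) (n : ℕ), ∃ u ∈ L, subword x k n <:+: u }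

/-- Extension of a letter map `σ : A → List B` to words: the free monoid morphism. -/
def wordMap (σ : A → List B) (w : List A) : List B := (w.map σ).flatten

/-- A morphism is non-erasing if no letter is mapped to the empty word. -/
def NonErasing (σ : A → List B) : Prop := ∀ a, σ a ≠ []

/-- The image subshift `σ(X)`. -/
def imageSubshift (σ : A → List B) (X : Set (ZWord A)) : Set (ZWord B) :=
  subshiftGen (wordMap σ '' lang X)

/-- The position at which the `σ`-image of the letter of `x` at index `n` starts
(the image of the letter at index 1 starts at index 1). -/
noncomputable def offset (σ : A → List B) (x : ZWord A) (n : ℤ) : ℤ :=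
  if 1 ≤ n then 1 + ∑ i ∈ Finset.Ico (1 : ℤ) n, ((σ (x i)).length : ℤ)
  else 1 - ∑ i ∈ Finset.Ico n (1 : ℤ), ((σ (x i)).length : ℤ)

/-- The induced map `σ^ℤ` on biinfinite words. -/
noncomputable def sigmaZ [Nonempty B] (σ : A → List B) (x : ZWord A) : ZWord B := fun j =>
  let n := Classical.epsilon fun n : ℤ => offset σ x n ≤ j ∧ j < offset σ x (n + 1)
  (σ (x n)).getD (j - offset σ x n).toNat (Classical.arbitrary B)

/-- The cylinder `[w]`: biinfinite words `x` with `x₁ ⋯ x_{|w|} = w`. -/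
def cylinder (w : List A) : Set (ZWord A) :=
  { x | ∀ i : Fin w.length, x (((i : ℕ) : ℤ) + 1) = w.get i }

/-- Shift-invariance of a measure. -/
def ShiftInvariantM (μ : Measure (ZWord A)) : Prop :=
  ∀ S : Set (ZWord A), MeasurableSet S → μ (shift ⁻¹' S) = μ S

/-- The cone `ℳ(X)` of shift-invariant finite Borel measures supported in `X`. -/
def measureCone (X : Set (ZWord A)) : Set (Measure (ZWord A)) :=
  { μ | μ Set.univ ≠ ⊤ ∧ ShiftInvariantM μ ∧ μ Xᶜ = 0 }

/-- The subdivision alphabet `𝒜_σ`. -/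
def SubAlph (σ : A → List B) : Type u := Σ a : A, Fin (σ a).length

/-- The subdivision morphism `π_σ`. -/
def subdivMap (σ : A → List B) : A → List (SubAlph σ) :=
  fun a => (List.finRange (σ a).length).map fun k => ⟨a, k⟩

/-- The letter-to-letter map `α_σ` on letters. -/
def letterMap (σ : A → List B) : SubAlph σ → B := fun p => (σ p.1).get p.2

/-- The letter-to-letter morphism `α_σ`. -/
def alphaMap (σ : A → List B) : SubAlph σ → List B := fun p => [letterMap σ p]

/-- The map `α_σ^ℤ` on biinfinite words. -/
def alphaZ (σ : A → List B) : ZWord (SubAlph σ) → ZWord B := fun y i => letterMap σ (y i)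

/-- The measure transfer map `σ^ℳ`: the push-forward under `α_σ` of the
subdivision measure `μ^{π_σ}` (realized concretely on the subdivision full shift). -/
noncomputable def transfer (σ : A → List B) (μ : Measure (ZWord A)) : Measure (ZWord B) :=
  letI := Classical.propDecidable (Nonempty (SubAlph σ))
  if h : Nonempty (SubAlph σ) then
    haveI := h
    Measure.map (alphaZ σ)
      (Measure.sum fun k : ℕ =>
        Measure.map (fun x => shift^[k] (sigmaZ (subdivMap σ) x))
          (μ.restrict { x | k < (σ (x 1)).length }))
  else 0

/-- Recognizability of `σ` in a subshift `X`. -/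
def Recognizable [Nonempty B] (σ : A → List B) (X : Set (ZWord A)) : Prop :=
  ∀ x ∈ X, ∀ x' ∈ X, ∀ k l : ℕ,
    k < (σ (x 1)).length → l < (σ (x' 1)).length →
    shift^[k] (sigmaZ σ x) = shift^[l] (sigmaZ σ x') → x = x' ∧ k = l

/-- `x` and `y` lie in the same shift-orbit. -/
def sameOrbit (x y : ZWord A) : Prop := ∃ m : ℤ, y = shiftBy m x

/-- `σ` is shift-orbit injective in `X`. -/
def ShiftOrbitInjective [Nonempty B] (σ : A → List B) (X : Set (ZWord A)) : Prop :=
  ∀ x ∈ X, ∀ y ∈ X, (sameOrbit (sigmaZ σ x) (sigmaZ σ y) ↔ sameOrbit x y)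

/-- The periodic biinfinite word `w^{±∞}`. -/
def periodicWord (w : List A) (h : w ≠ []) : ZWord A := fun i =>
  w.get ⟨(i % (w.length : ℤ)).toNat, by
    have hl : 0 < w.length := List.length_pos_iff.mpr h
    have h1 : 0 ≤ i % (w.length : ℤ) := Int.emod_nonneg i (by exact_mod_cast hl.ne')
    have h2 : i % (w.length : ℤ) < (w.length : ℤ) := Int.emod_lt_of_pos i (by exact_mod_cast hl)
    omega⟩

/-- A word is a proper power if `w = u^m` for some `m ≥ 2`. -/
def IsProperPower (w : List A) : Prop :=
  ∃ (u : List A) (m : ℕ), 2 ≤ m ∧ w = (List.replicate m u).flatten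

/-- `σ` is shift-period preserving in `X`. -/
def ShiftPeriodPreserving (σ : A → List B) (X : Set (ZWord A)) : Prop :=
  ∀ (w : List A) (h : w ≠ []), periodicWord w h ∈ X →
    (IsProperPower w ↔ IsProperPower (wordMap σ w))

/-- The incidence matrix `M(σ)` of a morphism. -/
noncomputable def incidence (σ : A → List B) : Matrix B A ℝ :=
  letI := Classical.decEq B
  Matrix.of fun b a => ((σ a).count b : ℝ)

/-- The number `|u|_w` of occurrences of `w` as a factor of `u`. -/
noncomputable def occ (w u : List A) : ℕ :=
  letI := Classical.decEq A
  ((List.range (u.length + 1)).filter fun i => decide ((u.drop i).take w.length = w)).length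

/-- A minimal subshift. -/
def IsMinimalSubshift (X : Set (ZWord A)) : Prop :=
  IsSubshift X ∧ ∀ Y, Y ⊆ X → IsSubshift Y → Y = X

/-- A shift-invariant probability measure. -/
def IsProbInvariant (μ : Measure (ZWord A)) : Prop :=
  ShiftInvariantM μ ∧ μ Set.univ = 1

/-- An ergodic shift-invariant probability measure: not a positive linear combination
of two distinct shift-invariant probability measures. -/
def IsErgodicMeasure (μ : Measure (ZWord A)) : Prop :=
  IsProbInvariant μ ∧
    ∀ ν₁ ν₂ : Measure (ZWord A), IsProbInvariant ν₁ → IsProbInvariant ν₂ →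
      ∀ c₁ c₂ : ℝ≥0∞, 0 < c₁ → 0 < c₂ → μ = c₁ • ν₁ + c₂ • ν₂ → ν₁ = ν₂

/-- Aperiodicity: no shift-periodic word in `X`. -/
def Aperiodic (X : Set (ZWord A)) : Prop :=
  ∀ x ∈ X, ∀ p : ℕ, 0 < p → shift^[p] x ≠ x

/-- Unique ergodicity of a subshift `X`. -/
def UniquelyErgodic (X : Set (ZWord A)) : Prop :=
  ∃! μ : Measure (ZWord A), IsErgodicMeasure μ ∧ μ ∈ measureCone X

/-- The complexity function `p_X(n)`. -/
noncomputable def complexity (X : Set (ZWord A)) (n : ℕ) : ℕ :=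
  Set.ncard { w : List A | w ∈ lang X ∧ w.length = n }

/-- The letter frequency vector of a measure. -/
noncomputable def freqMap (μ : Measure (ZWord A)) : A → ℝ := fun a => (μ (cylinder [a])).toReal

/-- The letter frequency cone `𝒞(X)`. -/
def letterFreqCone (X : Set (ZWord A)) : Set (A → ℝ) := freqMap '' measureCone X

/-- A primitive substitution: some power of the incidence matrix is positive. -/
def Primitive (τ : A → List A) : Prop :=
  ∃ p : ℕ, 0 < p ∧ ∀ a b : A, b ∈ (wordMap τ)^[p] [a]

/-- The substitutive subshift of a substitution. -/
def substitutiveSubshift (τ : A → List A) : Set (ZWord A) :=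
  { x | ∀ (k : ℤ) (m : ℕ), ∃ (p : ℕ) (a : A), 1 ≤ p ∧ subword x k m <:+: (wordMap τ)^[p] [a] }

section Directive

variable {𝒜 : ℕ → Type u}

/-- The telescoped morphism `σ_{[0,n)}`, on letters. -/
def teleW (σ : ∀ n, 𝒜 (n+1) → List (𝒜 n)) : (n : ℕ) → 𝒜 n → List (𝒜 0)
  | 0, a => [a]
  | n+1, a => wordMap (teleW σ n) (σ n a)

/-- The telescoped morphism `σ_{[k,k+m)}`, on letters. -/
def teleWFrom (σ : ∀ n, 𝒜 (n+1) → List (𝒜 n)) (k : ℕ) : (m : ℕ) → 𝒜 (k + m) → List (𝒜 k)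
  | 0, a => [a]
  | m+1, a => wordMap (teleWFrom σ k m) (σ (k + m) a)

/-- An everywhere growing directive sequence. -/
def EverywhereGrowing (σ : ∀ n, 𝒜 (n+1) → List (𝒜 n)) : Prop :=
  ∀ N : ℕ, ∃ n₀ : ℕ, ∀ n, n₀ ≤ n → ∀ a : 𝒜 n, N ≤ (teleW σ n a).length

/-- The subshift generated by a directive sequence. -/
def genSubshift (σ : ∀ n, 𝒜 (n+1) → List (𝒜 n)) : Set (ZWord (𝒜 0)) :=
  { x | ∀ (k : ℤ) (m : ℕ), ∃ n : ℕ, 1 ≤ n ∧ ∃ a : 𝒜 n, subword x k m <:+: teleW σ n a }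

/-- The level-`k` subshift of a directive sequence. -/
def levelSubshift (σ : ∀ n, 𝒜 (n+1) → List (𝒜 n)) (k : ℕ) : Set (ZWord (𝒜 k)) :=
  genSubshift (𝒜 := fun n => 𝒜 (k + n)) (fun n => σ (k + n))

/-- A vector tower on a directive sequence. -/
def IsVectorTower [∀ n, Fintype (𝒜 n)] (σ : ∀ n, 𝒜 (n+1) → List (𝒜 n))
    (v : ∀ n, 𝒜 n → ℝ) : Prop :=
  (∀ n a, 0 ≤ v n a) ∧ ∀ n, v n = (incidence (σ n)).mulVec (v (n+1))

/-- `μ = 𝔪(v)` is the invariant measure on the generated subshift obtained by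
evaluating the vector tower `v`. -/
def IsTowerMeasure [∀ n, Fintype (𝒜 n)] (σ : ∀ n, 𝒜 (n+1) → List (𝒜 n))
    (v : ∀ n, 𝒜 n → ℝ) (μ : Measure (ZWord (𝒜 0))) : Prop :=
  μ ∈ measureCone (genSubshift σ) ∧
    ∀ w : List (𝒜 0),
      Tendsto (fun n => ∑ a : 𝒜 n, v n a * (occ w (teleW σ n a) : ℝ)) atTop
        (nhds ((μ (cylinder w)).toReal))

/-- A measure tower on a directive sequence. -/
def IsMeasureTower (σ : ∀ n, 𝒜 (n+1) → List (𝒜 n))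
    (μs : ∀ n, Measure (ZWord (𝒜 n))) : Prop :=
  (∀ n, μs n ∈ measureCone (Set.univ : Set (ZWord (𝒜 n)))) ∧
    ∀ n, μs n = transfer (σ n) (μs (n+1))

/-- The intermediate letter frequency cone `𝒞_n`. -/
def freqConeAt [∀ n, Fintype (𝒜 n)] (σ : ∀ n, 𝒜 (n+1) → List (𝒜 n)) (n : ℕ) :
    Set (𝒜 n → ℝ) :=
  ⋂ m : ℕ, (incidence (teleWFrom σ n (m+1))).mulVec '' { v | ∀ a, 0 ≤ v a }

/-- The dimension `c_n` of the intermediate letter frequency cone. -/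
noncomputable def dimC [∀ n, Fintype (𝒜 n)] (σ : ∀ n, 𝒜 (n+1) → List (𝒜 n)) (n : ℕ) : ℕ :=
  Module.finrank ℝ (Submodule.span ℝ (freqConeAt σ n))

end Directive

section Prolong

variable {B : Type u} {𝒜 : ℕ → Type u}

/-- Alphabets of the prolonged directive sequence `⃖σ^τ`. -/
def prolongA (B : Type u) (𝒜 : ℕ → Type u) : ℕ → Type u
  | 0 => B
  | n+1 => 𝒜 n

instance prolongAFintype [Fintype B] [∀ n, Fintype (𝒜 n)] :
    ∀ n, Fintype (prolongA B 𝒜 n)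
  | 0 => inferInstanceAs (Fintype B)
  | n+1 => inferInstanceAs (Fintype (𝒜 n))

/-- The prolonged directive sequence `⃖σ^τ`. -/
def prolongSeq (τ : 𝒜 0 → List B) (σ : ∀ n, 𝒜 (n+1) → List (𝒜 n)) :
    ∀ n, prolongA B 𝒜 (n+1) → List (prolongA B 𝒜 n)
  | 0 => τ
  | n+1 => σ n

/-- The prolonged vector tower `⃖v^τ`. -/
noncomputable def prolongTower [Fintype (𝒜 0)] (τ : 𝒜 0 → List B) (v : ∀ n, 𝒜 n → ℝ) :
    ∀ n, prolongA B 𝒜 n → ℝ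
  | 0 => (incidence τ).mulVec (v 0)
  | n+1 => v n

end Prolong

/-- The morphism `τ_d : 𝒜_{d+1}* → 𝒜_d*`, `a_i ↦ a_i a_i` (i ≤ d), `a_{d+1} ↦ a_1 ⋯ a_d`. -/
def tauMap (d : ℕ) : Fin (d+1) → List (Fin d) := fun i =>
  if h : (i : ℕ) < d then [⟨i, h⟩, ⟨i, h⟩] else List.ofFn (fun j : Fin d => j)

/-- Sizes of the alphabets of the alternating sequence `σ₂ ∘ τ₂ ∘ σ₃ ∘ τ₃ ∘ ⋯`. -/
def sz (n : ℕ) : ℕ := n / 2 + 2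

/-- The alternating directive sequence `σ₂ ∘ τ₂ ∘ σ₃ ∘ τ₃ ∘ ⋯`. -/
def altSeq (σfam : ∀ d, Fin d → List (Fin d)) (n : ℕ) : Fin (sz (n+1)) → List (Fin (sz n)) :=
  fun a =>
    if h : n % 2 = 0 then
      σfam (sz n) (Fin.cast (by simp only [sz]; omega) a)
    else
      tauMap (sz n) (Fin.cast (by simp only [sz]; omega) a)

end SAdicPaper

/-!
All images `σ a` have length `L = ℓ + d`, so `σ^ℤ x` is the concatenation of the blocks `σ (x n)`
starting at the positions `1 + L (n - 1)`. If two shifted images agree with different offsets,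
then some `σ c` is a factor `q ++ r` of `σ a ++ σ b = (p ++ q) ++ (r ++ t)` with `q`, `r`
nonempty. In `σ c` the letter `c` occurs `ℓ + 1 ≥ 3` times and every other letter once. If
`c ∉ {a, b}`, then `q ++ r` contains at most two `c`s. Otherwise `σ c` has the shape
`x ++ y = y ++ z`; every letter of `y` then also occurs in `x`, hence twice in `σ c`, so `y` is a
power of `c`, and the counts leave no room for the letters different from `c`. With equal offsets
the blocks agree, and `σ` is injective because `c` is the only letter occurring `ℓ + 1` times in
`σ c`.
-/

theorem List.subset_of_append_eq_append {α : Type*} {x y z : List α} (hx : x ≠ [])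
    (h : x ++ y = y ++ z) : y ⊆ x := by
  induction hn : y.length using Nat.strong_induction_on generalizing y with
  | _ n ih =>
    rcases List.append_eq_append_iff.mp h.symm with ⟨_, rfl, -⟩ | ⟨b, rfl, -⟩
    · exact List.subset_append_left _ _
    · have hb : b.length < n := by simp [← hn, List.length_pos_iff.mpr hx]
      exact List.append_subset.mpr ⟨List.Subset.refl x, ih _ hb (by simpa using h) rfl⟩

namespace SAdicPaper

/-- `M(σ) = ℓ·I + 1`, read off the letter counts of the images. -/
def IncidenceIsScalarAddOnes [DecidableEq A] (σ : A → List A) (ℓ : ℕ) : Prop :=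
  ∀ i j : A, (σ j).count i = if i = j then ℓ + 1 else 1

theorem shift_iterate_apply (y : ZWord A) (k : ℕ) (i : ℤ) : shift^[k] y i = y (i + k) := by
  induction k generalizing y with
  | zero => simp
  | succ k ih =>
    rw [Function.iterate_succ_apply, ih]
    simp only [shift, Nat.cast_succ, add_assoc]

theorem shift_injective : Function.Injective (shift : ZWord A → ZWord A) := by
  intro y y' h
  funext i
  simpa [shift] using congrFun h (i - 1)

-- `subword` maps over `List.range n` coerced to `List ℤ`; this removes the coercion.
theorem subword_eq_map (y : ZWord A) (k : ℤ) (n : ℕ) :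
    subword y k n = (List.range n).map fun i : ℕ => y (k + i) := by
  simp [subword, ← List.map_eq_flatMap]

theorem length_subword (y : ZWord A) (k : ℤ) (n : ℕ) : (subword y k n).length = n := by
  simp [subword_eq_map]

theorem getElem_subword (y : ZWord A) (k : ℤ) (n i : ℕ) (hi : i < (subword y k n).length) :
    (subword y k n)[i] = y (k + i) := by
  simp [subword_eq_map]

theorem subword_add (y : ZWord A) (k : ℤ) (m n : ℕ) :
    subword y k (m + n) = subword y k m ++ subword y (k + m) n := by
  simp [subword_eq_map, List.range_add, add_assoc]

theorem subword_shift_iterate (y : ZWord A) (k : ℕ) (i : ℤ) (n : ℕ) :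
    subword (shift^[k] y) i n = subword y (i + k) n := by
  simp only [subword_eq_map, shift_iterate_apply, add_right_comm]

section ConstantLength

variable {σ : A → List B} {L : ℕ}

theorem offset_of_length_eq (hlen : ∀ a, (σ a).length = L) (x : ZWord A) (n : ℤ) :
    offset σ x n = 1 + L * (n - 1) := by
  unfold offset
  split_ifs with h
  · simp only [hlen, Finset.sum_const, Int.card_Ico, nsmul_eq_mul,
      Int.toNat_of_nonneg (by omega : 0 ≤ n - 1)]
    ring
  · simp only [hlen, Finset.sum_const, Int.card_Ico, nsmul_eq_mul,
      Int.toNat_of_nonneg (by omega : 0 ≤ 1 - n)]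
    ring

variable [Nonempty B]

theorem sigmaZ_apply_of_length_eq (hlen : ∀ a, (σ a).length = L) (x : ZWord A) (m : ℤ)
    {i : ℕ} (hi : i < L) :
    sigmaZ σ x (1 + L * m + i) = (σ (x (m + 1)))[i]'(by rw [hlen]; exact hi) := by
  have hoff := offset_of_length_eq hlen x
  set P : ℤ → Prop := fun n => offset σ x n ≤ 1 + L * m + i ∧ 1 + L * m + i < offset σ x (n + 1)
  have hn : Classical.epsilon P = m + 1 := by
    obtain ⟨h₁, h₂⟩ := Classical.epsilon_spec (p := P)
      ⟨m + 1, by simp only [P, hoff]; constructor <;> nlinarith⟩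
    rw [hoff] at h₁ h₂
    have : m < Classical.epsilon P := by by_contra! h; nlinarith
    have : Classical.epsilon P < m + 2 := by by_contra! h; nlinarith
    omega
  show (σ (x (Classical.epsilon P))).getD (1 + L * m + i - offset σ x (Classical.epsilon P)).toNat
    (Classical.arbitrary B) = _
  rw [hn, hoff, add_sub_cancel_right, add_sub_cancel_left, Int.toNat_natCast]
  exact List.getD_eq_getElem _ _ _

theorem subword_sigmaZ_of_length_eq (hlen : ∀ a, (σ a).length = L) (x : ZWord A) (m : ℤ) :
    subword (sigmaZ σ x) (1 + L * m) L = σ (x (m + 1)) :=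
  List.ext_getElem (by rw [length_subword, hlen]) fun i hi _ => by
    rw [getElem_subword]
    exact sigmaZ_apply_of_length_eq hlen x m (by rwa [length_subword] at hi)

theorem sigmaZ_injective_of_length_eq (hlen : ∀ a, (σ a).length = L)
    (hσ : Function.Injective σ) : Function.Injective (sigmaZ σ) := by
  intro x x' h
  funext n
  apply hσ
  have := subword_sigmaZ_of_length_eq hlen x (n - 1)
  rwa [h, subword_sigmaZ_of_length_eq hlen x' (n - 1), sub_add_cancel, eq_comm] at this

theorem image_eq_drop_append_take_of_shift (hlen : ∀ a, (σ a).length = L) {x x' : ZWord A}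
    {s : ℕ} (hs : s ≤ L) (h : shift^[s] (sigmaZ σ x) = sigmaZ σ x') :
    σ (x' 1) = (σ (x 1)).drop s ++ (σ (x 2)).take s := by
  have hblock := subword_sigmaZ_of_length_eq hlen
  have h₁ : subword (sigmaZ σ x) 1 (s + (L - s)) = σ (x 1) := by
    simpa [Nat.add_sub_cancel' hs] using hblock x 0
  have h₂ : subword (sigmaZ σ x) (1 + L) (s + (L - s)) = σ (x 2) := by
    simpa [Nat.add_sub_cancel' hs, (by norm_num : (1 : ℤ) + 1 = 2)] using hblock x 1
  calc σ (x' 1) = subword (sigmaZ σ x') 1 L := by simpa using (hblock x' 0).symm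
    _ = subword (sigmaZ σ x) (1 + s) ((L - s) + s) := by
      rw [← h, subword_shift_iterate, Nat.sub_add_cancel hs]
    _ = subword (sigmaZ σ x) (1 + s) (L - s) ++ subword (sigmaZ σ x) (1 + L) s := by
      rw [subword_add]
      congr 2
      push_cast [hs]
      ring
    _ = (σ (x 1)).drop s ++ (σ (x 2)).take s := by
      rw [← h₁, ← h₂, subword_add, subword_add, List.drop_left' (length_subword _ _ _),
        List.take_left' (length_subword _ _ _)]

end ConstantLength

namespace IncidenceIsScalarAddOnes

variable [DecidableEq A] {σ : A → List A} {ℓ : ℕ}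

theorem length_eq [Fintype A] (hσ : IncidenceIsScalarAddOnes σ ℓ) (a : A) :
    (σ a).length = ℓ + Fintype.card A := by
  have hsum : ∑ i, (σ a).count i = (σ a).length := by
    simpa using Multiset.sum_count_eq_card (s := Finset.univ) (m := (σ a : Multiset A)) (by simp)
  rw [← hsum, Finset.sum_congr rfl fun i _ => hσ i a]
  simp only [Finset.sum_ite, Finset.filter_eq', Finset.filter_ne', Finset.mem_univ, if_true,
    Finset.sum_const, Finset.card_singleton, Finset.card_erase_of_mem, Finset.card_univ,
    smul_eq_mul]
  have : 0 < Fintype.card A := Fintype.card_pos_iff.mpr ⟨a⟩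
  omega

theorem injective (hσ : IncidenceIsScalarAddOnes σ ℓ) (hℓ : ℓ ≠ 0) : Function.Injective σ := by
  intro a b hab
  by_contra hne
  have := hσ a b
  rw [← hab, hσ a a, if_pos rfl, if_neg hne] at this
  omega

theorem eq_of_mem_of_mem (hσ : IncidenceIsScalarAddOnes σ ℓ) {c e : A} {x y : List A}
    (hc : σ c = x ++ y) (hx : e ∈ x) (hy : e ∈ y) : e = c := by
  by_contra hne
  have hcount := hσ e c
  rw [if_neg hne, hc, List.count_append] at hcount
  have := List.count_pos_iff.mpr hx
  have := List.count_pos_iff.mpr hy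
  omega

theorem count_le_one_of_sublist (hσ : IncidenceIsScalarAddOnes σ ℓ) {b c : A} {l : List A}
    (h : l.Sublist (σ b)) (hcb : c ≠ b) : l.count c ≤ 1 :=
  (h.count_le c).trans (by rw [hσ, if_neg hcb])

theorem exists_mem_ne [Nontrivial A] (hσ : IncidenceIsScalarAddOnes σ ℓ) (c : A) :
    ∃ e ∈ σ c, e ≠ c := by
  obtain ⟨e, he⟩ := exists_ne c
  refine ⟨e, List.count_pos_iff.mp ?_, he⟩
  rw [hσ, if_neg he]
  exact Nat.one_pos

theorem append_ne_append_comm [Nontrivial A] (hσ : IncidenceIsScalarAddOnes σ ℓ) {c : A}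
    {x y : List A} (hc : σ c = x ++ y) (hx : x ≠ []) (hy : y ≠ []) : x ++ y ≠ y ++ x := by
  intro h
  obtain ⟨e, he, hec⟩ := hσ.exists_mem_ne c
  rw [hc, List.mem_append] at he
  rcases he with he | he
  · exact hec (hσ.eq_of_mem_of_mem hc he (List.subset_of_append_eq_append hy h.symm he))
  · exact hec (hσ.eq_of_mem_of_mem hc (List.subset_of_append_eq_append hx h he) he)

theorem append_ne_append_of_count_le_one [Nontrivial A] (hσ : IncidenceIsScalarAddOnes σ ℓ)
    (hℓ : 2 ≤ ℓ) {c : A} {x y z : List A} (hc : σ c = x ++ y) (hx : x ≠ []) (hy : y ≠ [])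
    (hcx : x.count c ≤ 1) : x ++ y ≠ y ++ z := by
  intro h
  have hyc : ∀ e ∈ y, e = c := fun e he =>
    hσ.eq_of_mem_of_mem hc (List.subset_of_append_eq_append hx h he) he
  rcases List.append_eq_append_iff.mp h with ⟨a, rfl, -⟩ | ⟨b, rfl, -⟩
  · obtain ⟨e, he, hec⟩ := hσ.exists_mem_ne c
    have hxa : σ c ⊆ x ++ a := by
      rw [hc]
      exact List.append_subset.mpr ⟨List.subset_append_left x a, List.Subset.refl _⟩
    exact hec (hyc e (hxa he))
  · have hcy : y.count c = y.length := List.count_eq_length.mpr fun e he => (hyc e he).symm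
    have hcount := hσ c c
    rw [if_pos rfl, hc, List.count_append, List.count_append, hcy] at hcount
    rw [List.count_append, hcy] at hcx
    have := List.length_pos_iff.mpr hy
    omega

theorem eq_nil_or_eq_nil_of_append_eq [Nontrivial A] (hσ : IncidenceIsScalarAddOnes σ ℓ)
    (hℓ : 2 ≤ ℓ) {a b c : A} {p q r t : List A} (ha : σ a = p ++ q) (hb : σ b = r ++ t)
    (hc : σ c = q ++ r) : q = [] ∨ r = [] := by
  by_contra! ⟨hq, hr⟩
  have hcq (hca : c ≠ a) : q.count c ≤ 1 :=
    hσ.count_le_one_of_sublist (ha ▸ List.sublist_append_right p q) hca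
  have hcr (hcb : c ≠ b) : r.count c ≤ 1 :=
    hσ.count_le_one_of_sublist (hb ▸ List.sublist_append_left r t) hcb
  by_cases hca : c = a <;> by_cases hcb : c = b
  · subst hca hcb
    have hpr : p = r := List.append_inj_left (ha.symm.trans hb) (by
      have := congrArg List.length (ha.symm.trans hc)
      simp only [List.length_append] at this
      omega)
    subst hpr
    exact hσ.append_ne_append_comm hc hq hr (hc.symm.trans ha)
  · subst hca
    have hlen := congrArg List.length (ha.symm.trans hc)
    have hcount := congrArg (List.count c) (ha.symm.trans hc)
    simp only [List.length_append, List.count_append] at hlen hcount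
    have hp : p ≠ [] := by
      rintro rfl
      simp_all
    exact hσ.append_ne_append_of_count_le_one hℓ ha hp hq (by linarith [hcr hcb])
      (ha.symm.trans hc)
  · subst hcb
    exact hσ.append_ne_append_of_count_le_one hℓ hc hq hr (hcq hca) (hc.symm.trans hb)
  · have hcount := hσ c c
    rw [if_pos rfl, hc, List.count_append] at hcount
    linarith [hcq hca, hcr hcb]

theorem shift_iterate_sigmaZ_ne_of_lt [Fintype A] [Nontrivial A]
    (hσ : IncidenceIsScalarAddOnes σ ℓ) (hℓ : 2 ≤ ℓ) {x x' : ZWord A} {k l : ℕ}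
    (hk : k < ℓ + Fintype.card A) (hlk : l < k) :
    shift^[k] (sigmaZ σ x) ≠ shift^[l] (sigmaZ σ x') := by
  intro h
  have hs : shift^[k - l] (sigmaZ σ x) = sigmaZ σ x' := shift_injective.iterate l <| by
    rwa [← Function.iterate_add_apply, Nat.add_sub_cancel' hlk.le]
  have hx' := image_eq_drop_append_take_of_shift hσ.length_eq (by omega) hs
  rcases hσ.eq_nil_or_eq_nil_of_append_eq hℓ (List.take_append_drop _ _).symm
    (List.take_append_drop _ _).symm hx' with h | h
  all_goals
    have := congrArg List.length h
    simp only [List.length_drop, List.length_take, hσ.length_eq, List.length_nil] at this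
    omega

end IncidenceIsScalarAddOnes

/-- For `d ≥ 2`, `ℓ ≥ 2`, any morphism `σ : 𝒜_(d)* → 𝒜_(d)*` whose
incidence matrix is `M(σ) = ℓ·I_d + 1_{d×d}` is recognizable in the full shift. -/
theorem recognizable_in_full_shift_of_incidence (d : ℕ) (hd : 2 ≤ d) (ℓ : ℕ) (hℓ : 2 ≤ ℓ)
    (σ : Fin d → List (Fin d))
    (hM : ∀ i j : Fin d, (σ j).count i = if i = j then ℓ + 1 else 1) :
    @Recognizable (Fin d) (Fin d) ⟨⟨0, by omega⟩⟩ σ (Set.univ : Set (ZWord (Fin d))) := by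
  have : Nontrivial (Fin d) := Fin.nontrivial_iff_two_le.mpr hd
  have hσ : IncidenceIsScalarAddOnes σ ℓ := hM
  intro x _ x' _ k l hk hl h
  rw [hσ.length_eq] at hk hl
  obtain rfl : k = l := by
    rcases lt_trichotomy k l with hkl | hkl | hkl
    · exact absurd h.symm (hσ.shift_iterate_sigmaZ_ne_of_lt hℓ hl hkl)
    · exact hkl
    · exact absurd h (hσ.shift_iterate_sigmaZ_ne_of_lt hℓ hk hkl)
  exact ⟨sigmaZ_injective_of_length_eq hσ.length_eq (hσ.injective (by omega))
    (shift_injective.iterate k h), rfl⟩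

end SAdicPaper
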